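/- arXiv:2510.19179 — 2 statements merged into one kernel-verified Lean document; each statement's English description precedes it below -/
import Mathlib

section
/- For integers p ≥ 5 and q ≥ 3, the number Q_{p,q} = 1 + log(q−1)/arccosh((p−2)/2) is never an integer; in fact Q_{p,q} is irrational. -/
/-- The inverse hyperbolic cosine. -/
noncomputable def arccosh (x : ℝ) : ℝ := Real.log (x + Real.sqrt (x ^ 2 - 1))

/-- `p^2 - 4p` is not a perfect square for `p ≥ 5`. -/
lemma not_isSquare_aux (p : ℕ) (hp : 5 ≤ p) : ¬ IsSquare (p ^ 2 - 4 * p) := by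
  rintro ⟨m, hm⟩
  have hp4 : 4 * p ≤ p ^ 2 := by nlinarith
  have hmz : (m : ℤ) * m = (p : ℤ) ^ 2 - 4 * p := by
    have := congrArg (Nat.cast : ℕ → ℤ) hm
    push_cast [Nat.cast_sub hp4] at this
    linarith
  have hp5 : (5 : ℤ) ≤ (p : ℤ) := by exact_mod_cast hp
  have hm0 : (0 : ℤ) ≤ (m : ℤ) := Int.natCast_nonneg m
  rcases le_or_gt (m : ℤ) ((p : ℤ) - 3) with h | h
  · nlinarith
  · have h2 : (p : ℤ) - 2 ≤ (m : ℤ) := by omega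
    nlinarith

/-- Powers of `x + √(x²-1)` have the form `A + B √(x²-1)` with `A, B` positive rationals. -/
lemma pow_form (c : ℚ) (hc : (3:ℚ)/2 ≤ c) (S : ℝ) (hS2 : S ^ 2 = (c : ℝ) ^ 2 - 1) :
    ∀ n : ℕ, ∃ A B : ℚ, 0 ≤ A ∧ 0 < B ∧ ((c : ℝ) + S) ^ (n + 1) = (A : ℝ) + (B : ℝ) * S := by
  intro n
  induction n with
  | zero => exact ⟨c, 1, by linarith, one_pos, by push_cast; ring⟩
  | succ n ih =>
    obtain ⟨A, B, hA, hB, hEq⟩ := ih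
    refine ⟨A * c + B * (c ^ 2 - 1), A + B * c, ?_, ?_, ?_⟩
    · have : (0:ℚ) < c ^ 2 - 1 := by nlinarith
      positivity
    · positivity
    · rw [pow_succ, hEq]
      push_cast
      linear_combination (B : ℝ) * hS2

/-- For integers `p ≥ 5`, `q ≥ 3`, the quantity
`Q_{p,q} = 1 + log(q−1)/arccosh((p−2)/2)` (the Hausdorff dimension of the boundary of
Bourdon's building `I_{p,q}`) is irrational; in particular it is never an integer. -/
theorem bourdon_dimension_irrational (p q : ℕ) (hp : 5 ≤ p) (hq : 3 ≤ q) :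
    Irrational (1 + Real.log ((q : ℝ) - 1) / arccosh (((p : ℝ) - 2) / 2)) ∧
      ∀ k : ℤ, (1 + Real.log ((q : ℝ) - 1) / arccosh (((p : ℝ) - 2) / 2)) ≠ (k : ℝ) := by
  have hpR : (5 : ℝ) ≤ (p : ℝ) := by exact_mod_cast hp
  have hqR : (3 : ℝ) ≤ (q : ℝ) := by exact_mod_cast hq
  set x : ℝ := ((p : ℝ) - 2) / 2 with hxdef
  have hx32 : (3:ℝ)/2 ≤ x := by rw [hxdef]; linarith
  have hx2 : (0:ℝ) ≤ x ^ 2 - 1 := by nlinarith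
  set S : ℝ := Real.sqrt (x ^ 2 - 1) with hSdef
  have hSnn : 0 ≤ S := Real.sqrt_nonneg _
  have hS2 : S ^ 2 = x ^ 2 - 1 := Real.sq_sqrt hx2
  -- S is irrational
  have hirrS : Irrational S := by
    have hn4 : ((p ^ 2 - 4 * p : ℕ) : ℝ) = (2 * S) ^ 2 := by
      have hp4 : 4 * p ≤ p ^ 2 := by nlinarith
      push_cast [Nat.cast_sub hp4]
      rw [hxdef] at hS2
      nlinarith [hS2]
    have hsqrtn : Real.sqrt ((p ^ 2 - 4 * p : ℕ) : ℝ) = 2 * S := by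
      rw [hn4, Real.sqrt_sq (by positivity)]
    have h2S : Irrational (2 * S) := by
      rw [← hsqrtn]
      exact irrational_sqrt_natCast_iff.mpr (not_isSquare_aux p hp)
    have : Irrational (((2:ℚ) : ℝ) * S) := by push_cast; exact h2S
    exact Irrational.of_ratCast_mul 2 this
  -- basic positivity
  have hα1 : 1 < x + S := by linarith
  have hΛ : arccosh x = Real.log (x + S) := rfl
  have hΛpos : 0 < arccosh x := by rw [hΛ]; exact Real.log_pos hα1
  have hLpos : 0 < Real.log ((q : ℝ) - 1) := Real.log_pos (by linarith)
  -- rational coefficient version of x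
  set c : ℚ := ((p : ℚ) - 2) / 2 with hcdef
  have hcx : (c : ℝ) = x := by rw [hcdef, hxdef]; push_cast; ring
  have hc32 : (3:ℚ)/2 ≤ c := by
    rw [hcdef]
    have : (5:ℚ) ≤ (p:ℚ) := by exact_mod_cast hp
    linarith
  have key : Irrational (Real.log ((q : ℝ) - 1) / arccosh x) := by
    intro ⟨r, hr⟩
    have hrpos : (0:ℚ) < r := by
      have : (0:ℝ) < (r : ℝ) := hr ▸ div_pos hLpos hΛpos
      exact_mod_cast this
    -- clear denominators: den * L = num * Λ
    have hnum : 0 < r.num := Rat.num_pos.mpr hrpos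
    have hden : 0 < (r.den : ℝ) := by positivity
    have hL : Real.log ((q : ℝ) - 1) = (r : ℝ) * arccosh x := by
      field_simp at hr
      linarith [hr]
    have hcast : (r : ℝ) = (r.num : ℝ) / (r.den : ℝ) := by
      rw [Rat.cast_def]
    have hmul : (r.den : ℝ) * Real.log ((q : ℝ) - 1) = (r.num : ℝ) * arccosh x := by
      rw [hL, hcast]; field_simp
    -- rewrite as logs of powers
    set a : ℕ := r.num.toNat with hadef
    have ha1 : 1 ≤ a := by rw [hadef]; omega
    have hacast : ((a : ℕ) : ℝ) = (r.num : ℝ) := by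
      rw [hadef]; exact_mod_cast congrArg (Int.cast : ℤ → ℝ) (Int.toNat_of_nonneg hnum.le)
    have hlogs : Real.log (((q : ℝ) - 1) ^ r.den) = Real.log ((x + S) ^ a) := by
      rw [Real.log_pow, Real.log_pow, hacast, hΛ] at *
      rw [hmul]
    have hpows : ((q : ℝ) - 1) ^ r.den = (x + S) ^ a := by
      have h1 : (0:ℝ) < ((q : ℝ) - 1) ^ r.den := pow_pos (by linarith) _
      have h2 : (0:ℝ) < (x + S) ^ a := pow_pos (by linarith) _
      rw [← Real.exp_log h1, ← Real.exp_log h2, hlogs]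
    -- LHS is rational, RHS is irrational
    obtain ⟨A, B, hA, hB, hEq⟩ := pow_form c hc32 S (by rw [hcx]; exact hS2) (a - 1)
    rw [Nat.sub_add_cancel ha1, hcx] at hEq
    have hirr : Irrational ((x + S) ^ a) := by
      rw [hEq]
      exact (hirrS.ratCast_mul hB.ne').ratCast_add A
    rw [← hpows] at hirr
    have : ((q : ℝ) - 1) ^ r.den = ((((q:ℚ) - 1) ^ r.den : ℚ) : ℝ) := by push_cast; ring
    rw [this] at hirr
    exact Rat.not_irrational _ hirr
  have h : Irrational (1 + Real.log ((q : ℝ) - 1) / arccosh x) := by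
    simpa using key.ratCast_add 1
  exact ⟨h, fun k => h.ne_int k⟩
end

section
/- The set {Q_{p,q} : p ≥ 5, q ≥ 3 integers} is dense in the interval [1,∞), where Q_{p,q} = 1 + log(q−1)/arccosh((p−2)/2). -/
/-- The set `{Q_{p,q} = 1 + log(q−1)/arccosh((p−2)/2) : p ≥ 5, q ≥ 3 integers}` is dense
in `[1, ∞)`. -/
theorem bourdon_dimensions_dense :
    Set.Ici (1 : ℝ) ⊆ closure {x : ℝ | ∃ p q : ℕ, 5 ≤ p ∧ 3 ≤ q ∧
      x = 1 + Real.log ((q : ℝ) - 1) / arccosh (((p : ℝ) - 2) / 2)} := by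
  intro y hy
  rw [Metric.mem_closure_iff]
  intro ε hε
  have hy1 : (1:ℝ) ≤ y := hy
  set t : ℝ := y - 1 with ht
  have ht0 : 0 ≤ t := by simp [ht]; linarith
  have hlog3 : 0 < Real.log 3 := Real.log_pos (by norm_num)
  set M : ℝ := Real.log 3 / ε + 1 with hM
  have hM0 : Real.log 3 / ε < M := by simp [hM]
  have hMpos : 0 < M := lt_trans (div_pos hlog3 hε) hM0
  set p : ℕ := ⌈2 * Real.exp M + 2⌉₊ with hp
  have hexpM : 1 ≤ Real.exp M := Real.one_le_exp hMpos.le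
  have hp5 : 5 ≤ p := by
    have hadd := Real.add_one_le_exp M
    have h4 : (4:ℝ) < 2 * Real.exp M + 2 := by nlinarith
    exact Nat.lt_ceil.mpr h4
  have hpc : 2 * Real.exp M + 2 ≤ (p:ℝ) := Nat.le_ceil _
  set x : ℝ := ((p:ℝ) - 2) / 2 with hx
  have hxM : Real.exp M ≤ x := by rw [hx]; linarith
  have hx1 : 1 ≤ x := le_trans hexpM hxM
  have hx0 : 0 < x := lt_of_lt_of_le one_pos hx1
  have hsqrt : 0 ≤ Real.sqrt (x ^ 2 - 1) := Real.sqrt_nonneg _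
  have hc_ge : M ≤ arccosh x := by
    have h1 : M ≤ Real.log x := (Real.le_log_iff_exp_le hx0).mpr hxM
    have h2 : Real.log x ≤ Real.log (x + Real.sqrt (x ^ 2 - 1)) :=
      Real.log_le_log hx0 (by linarith)
    calc M ≤ Real.log x := h1
      _ ≤ _ := h2
  set c : ℝ := arccosh x with hc
  have hc0 : 0 < c := lt_of_lt_of_le hMpos hc_ge
  set q : ℕ := ⌈Real.exp (t * c)⌉₊ + 2 with hq
  have hq3 : 3 ≤ q := by
    have h1 : 1 ≤ ⌈Real.exp (t * c)⌉₊ := Nat.one_le_ceil_iff.mpr (Real.exp_pos _)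
    omega
  have hexp1 : 1 ≤ Real.exp (t * c) := Real.one_le_exp (by positivity)
  have hn_lb : Real.exp (t * c) ≤ (q:ℝ) - 1 := by
    have h := Nat.le_ceil (Real.exp (t * c))
    have : (q:ℝ) = (⌈Real.exp (t * c)⌉₊ : ℝ) + 2 := by exact_mod_cast rfl
    linarith
  have hn_ub : (q:ℝ) - 1 ≤ 3 * Real.exp (t * c) := by
    have h := Nat.ceil_lt_add_one (le_of_lt (Real.exp_pos (t * c)))
    have : (q:ℝ) = (⌈Real.exp (t * c)⌉₊ : ℝ) + 2 := by exact_mod_cast rfl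
    linarith
  have hn0 : 0 < (q:ℝ) - 1 := lt_of_lt_of_le (lt_of_lt_of_le one_pos hexp1) hn_lb
  have hlogn_lb : t * c ≤ Real.log ((q:ℝ) - 1) := by
    calc t * c = Real.log (Real.exp (t * c)) := (Real.log_exp _).symm
      _ ≤ _ := Real.log_le_log (Real.exp_pos _) hn_lb
  have hlogn_ub : Real.log ((q:ℝ) - 1) ≤ Real.log 3 + t * c := by
    calc Real.log ((q:ℝ)-1) ≤ Real.log (3 * Real.exp (t*c)) := Real.log_le_log hn0 hn_ub
      _ = Real.log 3 + t * c := by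
          rw [Real.log_mul (by norm_num) (ne_of_gt (Real.exp_pos _)), Real.log_exp]
  refine ⟨1 + Real.log ((q:ℝ)-1) / c, ⟨p, q, hp5, hq3, rfl⟩, ?_⟩
  have hdiv : Real.log 3 / c < ε := by
    rw [div_lt_iff₀ hc0]
    have h1 : Real.log 3 / ε < c := lt_of_lt_of_le hM0 hc_ge
    rw [div_lt_iff₀ hε] at h1
    linarith
  have h1 : t ≤ Real.log ((q:ℝ)-1) / c := by
    rw [le_div_iff₀ hc0]; exact hlogn_lb
  have h2 : Real.log ((q:ℝ)-1) / c ≤ Real.log 3 / c + t := by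
    have h := (div_le_div_iff_of_pos_right hc0).mpr hlogn_ub
    rwa [add_div, mul_div_assoc, div_self (ne_of_gt hc0), mul_one] at h
  rw [Real.dist_eq]
  have heq : y - (1 + Real.log ((q:ℝ)-1) / c) = t - Real.log ((q:ℝ)-1) / c := by
    rw [ht]; ring
  rw [heq, abs_sub_lt_iff]
  constructor <;> linarith
end
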